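/- T₀(Π) is a tester program for any epistemic program Π in normal form: a non-empty set of interpretations W is a worldview of Π if and only if W equals the restriction to At(Π) of the stable models of T₀(Π) under the assumption k(W). -/

import Mathlib

/-! Framework for (epistemic) logic programs:
objective literals, rules, programs, reducts, stable models,
subjective literals, subjective reducts, worldviews, and the
generate-and-test programs T₀, G₀, kp, G₁. -/

/-- Extended objective literals over an atom type `α`:
an atom, a negated atom, a doubly negated atom, or a truth constant. -/
inductive Lit (α : Type) : Type
  | pos (a : α)
  | neg (a : α)
  | nneg (a : α)
  | top
  | bot

namespace Lit

/-- Satisfaction of an extended objective literal by an interpretation. -/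
def sat {α : Type} (I : Set α) : Lit α → Prop
  | .pos a => a ∈ I
  | .neg a => a ∉ I
  | .nneg a => a ∈ I
  | .top => True
  | .bot => False

/-- A literal is negated if it is of the form `¬a` or `¬¬a`. -/
def isNeg {α : Type} : Lit α → Prop
  | .neg _ => True
  | .nneg _ => True
  | _ => False

/-- Rename atoms in a literal. -/
def map {α β : Type} (f : α → β) : Lit α → Lit β
  | .pos a => .pos (f a)
  | .neg a => .neg (f a)
  | .nneg a => .nneg (f a)
  | .top => .top
  | .bot => .bot

/-- The atoms occurring in a literal. -/
def atoms {α : Type} : Lit α → Set α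
  | .pos a => {a}
  | .neg a => {a}
  | .nneg a => {a}
  | _ => ∅

end Lit

/-- An objective rule `a₁ ∨ ... ∨ aₙ ← L₁,...,Lₘ`. -/
structure Rule (α : Type) where
  head : Set α
  body : Set (Lit α)

/-- An objective program: a set of rules. -/
abbrev Program (α : Type) := Set (Rule α)

/-- A rule is satisfied by `I` if `I` satisfies some head atom
whenever it satisfies all body literals. -/
def Rule.sat {α : Type} (I : Set α) (r : Rule α) : Prop :=
  (∀ L ∈ r.body, L.sat I) → ∃ a ∈ r.head, a ∈ I

/-- A model of a program satisfies all its rules. -/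
def isModel {α : Type} (I : Set α) (P : Program α) : Prop := ∀ r ∈ P, r.sat I

/-- The reduct of a program with respect to `I`: drop rules with an unsatisfied
negated body literal; delete negated literals from the remaining rules. -/
def reduct {α : Type} (P : Program α) (I : Set α) : Program α :=
  { r' | ∃ r ∈ P, (∀ L ∈ r.body, L.isNeg → L.sat I) ∧
      r' = ⟨r.head, {L | L ∈ r.body ∧ ¬ L.isNeg}⟩ }

/-- `I` is a stable model of `P` iff it is a ⊆-minimal model of the reduct `P^I`. -/
def isStable {α : Type} (P : Program α) (I : Set α) : Prop :=
  isModel I (reduct P I) ∧ ∀ J ⊆ I, isModel J (reduct P I) → J = I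

/-- The set of stable models of a program. -/
def SM {α : Type} (P : Program α) : Set (Set α) := { I | isStable P I }

/-- A program extended with assumption constraints `⊥ ← ¬a` (for `a ∈ Apos`)
and `⊥ ← a` (for `a ∈ Aneg`). -/
def withAssumption {α : Type} (P : Program α) (Apos Aneg : Set α) : Program α :=
  P ∪ ((fun a => (⟨∅, {Lit.neg a}⟩ : Rule α)) '' Apos)
    ∪ ((fun a => (⟨∅, {Lit.pos a}⟩ : Rule α)) '' Aneg)

/-- Stable models of `P` under an assumption. -/
def SMA {α : Type} (P : Program α) (Apos Aneg : Set α) : Set (Set α) :=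
  SM (withAssumption P Apos Aneg)

/-- Literals of epistemic programs: an objective literal, or a subjective
atom `K l` preceded by zero, one, or two negations. -/
inductive SLit (α : Type) : Type
  | obj (l : Lit α)
  | k (l : Lit α)
  | nk (l : Lit α)
  | nnk (l : Lit α)

/-- An epistemic rule. -/
structure ERule (α : Type) where
  head : Set α
  body : Set (SLit α)

/-- An epistemic program: a set of epistemic rules. -/
abbrev EProgram (α : Type) := Set (ERule α)

/-- `W ⊨ K l`: every interpretation in `W` satisfies `l`. -/
def satK {α : Type} (W : Set (Set α)) (l : Lit α) : Prop := ∀ I ∈ W, l.sat I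

open scoped Classical in
/-- Replace a subjective literal by `⊤`/`⊥` according to `W`; objective
literals are unchanged. -/
noncomputable def SLit.reduce {α : Type} (W : Set (Set α)) : SLit α → Lit α
  | .obj l => l
  | .k l => if satK W l then .top else .bot
  | .nk l => if satK W l then .bot else .top
  | .nnk l => if satK W l then .top else .bot

/-- The subjective reduct `P^W`. -/
noncomputable def subjReduct {α : Type} (P : EProgram α) (W : Set (Set α)) : Program α :=
  (fun r : ERule α => (⟨r.head, (SLit.reduce W) '' r.body⟩ : Rule α)) '' P

/-- A worldview: a non-empty set of interpretations `W` with `W = SM(P^W)`. -/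
def isWorldview {α : Type} (P : EProgram α) (W : Set (Set α)) : Prop :=
  W.Nonempty ∧ W = SM (subjReduct P W)

/-- Normal-form subjective literals: `K a`, `¬K a`, `¬¬K a` with `a` an atom. -/
def SLit.isNormal {α : Type} : SLit α → Prop
  | .obj _ => True
  | .k (.pos _) => True
  | .nk (.pos _) => True
  | .nnk (.pos _) => True
  | _ => False

/-- A program is in normal form if negation does not occur in the scope of `K`. -/
def isNormalForm {α : Type} (P : EProgram α) : Prop :=
  ∀ r ∈ P, ∀ L ∈ r.body, L.isNormal

/-- The atoms `a` such that a subjective atom `K a` occurs in the program; the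
corresponding fresh atoms `ka` are represented as `Sum.inr a`. -/
def KAtoms {α : Type} (P : EProgram α) : Set α :=
  { a | ∃ r ∈ P, SLit.k (Lit.pos a) ∈ r.body ∨ SLit.nk (Lit.pos a) ∈ r.body ∨
        SLit.nnk (Lit.pos a) ∈ r.body }

/-- Replace subjective literals on `K a` by objective literals on the fresh
atom `ka = Sum.inr a`; original atoms become `Sum.inl a`. -/
def SLit.t0 {α : Type} : SLit α → Lit (α ⊕ α)
  | .obj l => l.map Sum.inl
  | .k (.pos a) => .pos (Sum.inr a)
  | .nk (.pos a) => .neg (Sum.inr a)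
  | .nnk (.pos a) => .nneg (Sum.inr a)
  | _ => .bot

/-- The tester program `T₀(P)`: `k(P)` plus a choice rule `{ka}`
(i.e. `ka ← ¬¬ka`) for each `ka ∈ K(P)`. -/
def T0 {α : Type} (P : EProgram α) : Program (α ⊕ α) :=
  ((fun r : ERule α => (⟨Sum.inl '' r.head, SLit.t0 '' r.body⟩ : Rule (α ⊕ α))) '' P)
  ∪ ((fun a => (⟨{Sum.inr a}, {Lit.nneg (Sum.inr a)}⟩ : Rule (α ⊕ α))) '' KAtoms P)

/-- The generator program `G₀(P)`: `T₀(P)` plus consistency constraints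
`⊥ ← ka, ¬a` for each `ka ∈ K(P)`. -/
def G0 {α : Type} (P : EProgram α) : Program (α ⊕ α) :=
  T0 P ∪ ((fun a => (⟨∅, {Lit.pos (Sum.inr a), Lit.neg (Sum.inl a)}⟩ : Rule (α ⊕ α))) '' KAtoms P)

/-- `k(M) = M ∩ K(P)`, read as a set of original atoms. -/
def kOfM {α : Type} (M : Set (α ⊕ α)) : Set α := { a | Sum.inr a ∈ M }

/-- `k(W) = {ka ∈ K(P) : W ⊨ K a}`, read as a set of original atoms. -/
def kOfW {α : Type} (P : EProgram α) (W : Set (Set α)) : Set α :=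
  { a | a ∈ KAtoms P ∧ ∀ I ∈ W, a ∈ I }

/-- Restriction of an interpretation to the original atoms `At(P)`. -/
def restr {α : Type} (M : Set (α ⊕ α)) : Set α := { a | Sum.inl a ∈ M }

/-- The positive part of the assumption determined by a set `S` of K-atoms:
`ka` for each `ka ∈ K(P)` with `a ∈ S`. -/
def asmP {α : Type} (P : EProgram α) (S : Set α) : Set (α ⊕ α) := Sum.inr '' (S ∩ KAtoms P)

/-- The negative part of the assumption determined by a set `S` of K-atoms:
`¬ka` for each `ka ∈ K(P)` with `a ∉ S`. -/
def asmN {α : Type} (P : EProgram α) (S : Set α) : Set (α ⊕ α) := Sum.inr '' (KAtoms P \ S)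

/-- A generator program for `P`. -/
def isGenerator {α : Type} (P : EProgram α) (G : Program (α ⊕ α)) : Prop :=
  (∀ W, isWorldview P W → ∃ M ∈ SM G, kOfM M = kOfW P W ∧ restr M ∈ W) ∧
  (∀ M ∈ SM G, ∀ W : Set (Set α), kOfW P W = kOfM M → restr M ∈ SM (subjReduct P W))

/-- A tester program for `P`: a non-empty `W` is a worldview of `P` iff
`W` equals the restriction to `At(P)` of `SM(T; k(W))`. -/
def isTester {α : Type} (P : EProgram α) (T : Program (α ⊕ α)) : Prop :=
  ∀ W : Set (Set α), W.Nonempty →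
    (isWorldview P W ↔ W = restr '' SMA T (asmP P (kOfW P W)) (asmN P (kOfW P W)))

/-- Atoms of the extended signature for the propagation program: original
atoms and `ka`-atoms (left) plus fresh atoms `kp_a`, `kn_a`, `kn_r` (right). -/
abbrev PExt (α : Type) : Type := (α ⊕ α) ⊕ (α ⊕ (α ⊕ ERule α))

/-- An original atom `a` in the extended signature. -/
def aE {α : Type} (a : α) : PExt α := Sum.inl (Sum.inl a)

/-- The atom `ka` in the extended signature. -/
def kaE {α : Type} (a : α) : PExt α := Sum.inl (Sum.inr a)

/-- The fresh propagation atom `kp_a`. -/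
def kpA {α : Type} (a : α) : PExt α := Sum.inr (Sum.inl a)

/-- The fresh propagation atom `kn_a`. -/
def knA {α : Type} (a : α) : PExt α := Sum.inr (Sum.inr (Sum.inl a))

/-- The fresh propagation atom `kn_r` for a rule `r`. -/
def knR {α : Type} (r : ERule α) : PExt α := Sum.inr (Sum.inr (Sum.inr r))

/-- Translation of a body literal for the rules defining `kp_a`. -/
def SLit.kpBody {α : Type} : SLit α → Lit (PExt α)
  | .obj (.pos a) => .pos (kpA a)
  | .obj (.neg a) => .pos (knA a)
  | .k (.pos a) => .pos (kaE a)
  | .nk (.pos a) => .neg (kaE a)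
  | .nnk (.pos a) => .nneg (kaE a)
  | _ => .bot

/-- Translation of a body literal for the rules defining `kn_r`
(the "complement" of the literal). -/
def SLit.knBody {α : Type} : SLit α → Lit (PExt α)
  | .obj (.pos a) => .pos (knA a)
  | .obj (.neg a) => .pos (kpA a)
  | .k (.pos a) => .neg (kaE a)
  | .nk (.pos a) => .pos (kaE a)
  | .nnk (.pos a) => .neg (kaE a)
  | _ => .top

/-- The atoms occurring in a subjective literal. -/
def SLit.atoms {α : Type} : SLit α → Set α
  | .obj l => l.atoms
  | .k l => l.atoms
  | .nk l => l.atoms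
  | .nnk l => l.atoms

/-- The atoms occurring in an epistemic program. -/
def AtE {α : Type} (P : EProgram α) : Set α :=
  { a | ∃ r ∈ P, a ∈ r.head ∨ ∃ L ∈ r.body, a ∈ L.atoms }

/-- The epistemic-propagation program `kp(P)`:
rules `kp_{a} ← ...` for single-atom-head rules, rules `kn_r ← ...` for all
rules, and completion rules `kn_a ← kn_{r₁},...,kn_{rₖ}`. -/
def kpProg {α : Type} (P : EProgram α) : Program (PExt α) :=
  { r' | ∃ r ∈ P, ∃ a : α, r.head = {a} ∧ r' = ⟨{kpA a}, SLit.kpBody '' r.body⟩ }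
  ∪ { r' | ∃ r ∈ P, ∃ L ∈ r.body, r' = ⟨{knR r}, {L.knBody}⟩ }
  ∪ { r' | ∃ a ∈ AtE P,
        r' = ⟨{knA a}, (fun r => Lit.pos (knR r)) '' { r ∈ P | a ∈ r.head }⟩ }

/-- Rename the atoms of a rule. -/
def Rule.mapAtoms {α β : Type} (f : α → β) (r : Rule α) : Rule β :=
  ⟨f '' r.head, (Lit.map f) '' r.body⟩

/-- `G₀(P)` viewed over the extended signature. -/
def G0ext {α : Type} (P : EProgram α) : Program (PExt α) :=
  (Rule.mapAtoms Sum.inl) '' (G0 P)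

/-- The generator program `G₁(P)`: `G₀(P)` together with the propagation
program `kp(P)` and consistency constraints `⊥ ← kp_a, ¬ka`. -/
def G1 {α : Type} (P : EProgram α) : Program (PExt α) :=
  G0ext P ∪ kpProg P
  ∪ { r' | ∃ a ∈ KAtoms P, r' = ⟨∅, {Lit.pos (kpA a), Lit.neg (kaE a)}⟩ }

/-! Under the assumption `k(W)`, the `ka`-atoms of a stable model of `T₀(Π)` are exactly those
of `k(W)`: the assumption constraints force them in or out, and an atom `ka` outside `K(Π)` heads
no rule. So the stable models have the form `I ∪ k(W)`. On interpretations of this form the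
reduct of `T₀(Π)` mirrors the reduct of the subjective reduct `Π^W`: in normal form, `ka` is
true exactly when `W ⊨ K a`, and the choice rules and assumption constraints hold vacuously.
Hence restriction to `At(Π)` maps the stable models of `T₀(Π)` under `k(W)` onto those of `Π^W`,
and the theorem is the definition of a worldview. -/

section Combine

variable {α : Type}

def combine (I S : Set α) : Set (α ⊕ α) := Sum.inl '' I ∪ Sum.inr '' S

@[simp] theorem inl_mem_combine {I S : Set α} {a : α} : Sum.inl a ∈ combine I S ↔ a ∈ I := by
  simp [combine]

@[simp] theorem inr_mem_combine {I S : Set α} {a : α} : Sum.inr a ∈ combine I S ↔ a ∈ S := by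
  simp [combine]

@[simp] theorem restr_combine (I S : Set α) : restr (combine I S) = I := by
  ext a; simp [restr]

theorem combine_subset_combine_iff {I J S : Set α} : combine J S ⊆ combine I S ↔ J ⊆ I := by
  refine ⟨fun h a ha => inl_mem_combine.mp (h (inl_mem_combine.mpr ha)), fun h => ?_⟩
  rintro (a | a) ha
  · exact inl_mem_combine.mpr (h (inl_mem_combine.mp ha))
  · exact inr_mem_combine.mpr (inr_mem_combine.mp ha)

theorem combine_restr {M : Set (α ⊕ α)} {S : Set α} (h : ∀ a, Sum.inr a ∈ M ↔ a ∈ S) :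
    combine (restr M) S = M := by
  ext (a | a)
  · simp [restr]
  · simp [h]

end Combine

namespace Lit

variable {α : Type}

/-- `L.satReduct I J`: `L` holds in `J` as a body literal of the reduct with respect to `I`
(negated literals are evaluated in `I`, the others in `J`). -/
def satReduct (I J : Set α) : Lit α → Prop
  | .pos a => a ∈ J
  | .neg a => a ∉ I
  | .nneg a => a ∈ I
  | .top => True
  | .bot => False

theorem satReduct_iff {I J : Set α} {L : Lit α} :
    L.satReduct I J ↔ (L.isNeg → L.sat I) ∧ (¬ L.isNeg → L.sat J) := by
  cases L <;> simp [satReduct, isNeg, sat]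

theorem satReduct_mono {I J J' : Set α} (h : J ⊆ J') {L : Lit α} :
    L.satReduct I J → L.satReduct I J' := by
  cases L
  case pos a => exact fun ha => h ha
  all_goals exact id

theorem satReduct_map_inl_combine {I J S : Set α} {L : Lit α} :
    (L.map Sum.inl).satReduct (combine I S) (combine J S) ↔ L.satReduct I J := by
  cases L <;> simp [map, satReduct]

end Lit

section StableModels

variable {α β : Type}

theorem isModel_reduct_iff {P : Program α} {I J : Set α} :
    isModel J (reduct P I) ↔
      ∀ r ∈ P, (∀ L ∈ r.body, L.satReduct I J) → ∃ a ∈ r.head, a ∈ J := by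
  simp only [Lit.satReduct_iff]
  constructor
  · intro h r hr hbody
    exact h ⟨r.head, {L | L ∈ r.body ∧ ¬ L.isNeg}⟩ ⟨r, hr, fun L hL => (hbody L hL).1, rfl⟩
      fun L hL => (hbody L hL.1).2 hL.2
  · rintro h _ ⟨r, hr, hneg, rfl⟩ hpos
    exact h r hr fun L hL => ⟨hneg L hL, fun hn => hpos L ⟨hL, hn⟩⟩

theorem not_satReduct_of_constraint_mem {P : Program α} {I J : Set α} {L : Lit α}
    (hL : (⟨∅, {L}⟩ : Rule α) ∈ P) (hJ : isModel J (reduct P I)) : ¬ L.satReduct I J := by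
  intro hsat
  obtain ⟨a, ha, -⟩ := isModel_reduct_iff.mp hJ _ hL (by simpa using hsat)
  exact ha

/-- Removing an atom that heads no rule keeps a model of the reduct, so by minimality such an
atom is absent from every stable model. -/
theorem exists_mem_head_of_mem_SM {P : Program α} {M : Set α} (hM : M ∈ SM P) {x : α}
    (hx : x ∈ M) : ∃ r ∈ P, x ∈ r.head := by
  by_contra! hnone
  have hmodel : isModel (M \ {x}) (reduct P M) := by
    refine isModel_reduct_iff.mpr fun r hr hbody => ?_
    obtain ⟨a, ha, haM⟩ := isModel_reduct_iff.mp hM.1 r hr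
      fun L hL => Lit.satReduct_mono Set.sdiff_subset (hbody L hL)
    exact ⟨a, ha, haM, fun hax => hnone r hr (hax ▸ ha)⟩
  have hx' : x ∈ M \ {x} := (hM.2 _ Set.sdiff_subset hmodel).symm ▸ hx
  exact hx'.2 rfl

theorem image_SM_eq_SM {P : Program α} {Q : Program β} (e : Set α → Set β)
    (he : ∀ I J, e J ⊆ e I ↔ J ⊆ I)
    (hmodel : ∀ I J, isModel (e J) (reduct Q (e I)) ↔ isModel J (reduct P I))
    (hrange : ∀ I N, N ⊆ e I → isModel N (reduct Q (e I)) → N ∈ Set.range e)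
    (hSM : SM Q ⊆ Set.range e) :
    e '' SM P = SM Q := by
  ext M
  constructor
  · rintro ⟨I, hI, rfl⟩
    refine ⟨(hmodel I I).mpr hI.1, fun N hN hNmodel => ?_⟩
    obtain ⟨J, rfl⟩ := hrange I N hN hNmodel
    rw [hI.2 J ((he I J).mp hN) ((hmodel I J).mp hNmodel)]
  · intro hM
    obtain ⟨I, rfl⟩ := hSM hM
    refine ⟨I, ⟨(hmodel I I).mp hM.1, fun J hJ hJmodel => ?_⟩, rfl⟩
    have hEq := hM.2 (e J) ((he I J).mpr hJ) ((hmodel I J).mpr hJmodel)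
    exact le_antisymm hJ ((he J I).mp hEq.ge)

end StableModels

section Tester

variable {α : Type}

def T0Assuming (P : EProgram α) (W : Set (Set α)) : Program (α ⊕ α) :=
  withAssumption (T0 P) (asmP P (kOfW P W)) (asmN P (kOfW P W))

variable {P : EProgram α} {W : Set (Set α)}

theorem choice_mem_T0Assuming {a : α} (ha : a ∈ KAtoms P) :
    (⟨{Sum.inr a}, {.nneg (Sum.inr a)}⟩ : Rule (α ⊕ α)) ∈ T0Assuming P W :=
  Or.inl (Or.inl (Or.inr ⟨a, ha, rfl⟩))

theorem asmP_constraint_mem_T0Assuming {a : α} (ha : a ∈ kOfW P W) :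
    (⟨∅, {.neg (Sum.inr a)}⟩ : Rule (α ⊕ α)) ∈ T0Assuming P W :=
  Or.inl (Or.inr ⟨Sum.inr a, ⟨a, ⟨ha, ha.1⟩, rfl⟩, rfl⟩)

theorem asmN_constraint_mem_T0Assuming {a : α} (ha : a ∈ KAtoms P) (haW : a ∉ kOfW P W) :
    (⟨∅, {.pos (Sum.inr a)}⟩ : Rule (α ⊕ α)) ∈ T0Assuming P W :=
  Or.inr ⟨Sum.inr a, ⟨a, ⟨ha, haW⟩, rfl⟩, rfl⟩

theorem mem_kOfW_iff {a : α} (ha : a ∈ KAtoms P) : a ∈ kOfW P W ↔ satK W (.pos a) :=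
  and_iff_right ha

theorem satReduct_t0_iff (hnf : isNormalForm P) {r : ERule α} (hr : r ∈ P) {L : SLit α}
    (hL : L ∈ r.body) (I J : Set α) :
    L.t0.satReduct (combine I (kOfW P W)) (combine J (kOfW P W)) ↔
      (L.reduce W).satReduct I J := by
  have hnorm := hnf r hr L hL
  rcases L with l | l | l | l
  · exact Lit.satReduct_map_inl_combine
  all_goals
    rcases l with a | a | a | _ | _ <;> simp only [SLit.isNormal] at hnorm
    have := mem_kOfW_iff (W := W) (a := a) ⟨r, hr, by simp [hL]⟩
    by_cases h : satK W (.pos a) <;> simp_all [SLit.t0, SLit.reduce, Lit.satReduct]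

/-- On interpretations of the form `I ∪ k(W)` the choice rules and assumption constraints hold
vacuously, so only the translated rules of `P` matter. -/
theorem isModel_T0Assuming_iff (hnf : isNormalForm P) (I J : Set α) :
    isModel (combine J (kOfW P W)) (reduct (T0Assuming P W) (combine I (kOfW P W))) ↔
      isModel J (reduct (subjReduct P W) I) := by
  simp only [isModel_reduct_iff, T0Assuming, withAssumption, T0, asmP, asmN, subjReduct,
    Set.mem_union, or_imp, forall_and, Set.forall_mem_image, Set.mem_singleton_iff, forall_eq,
    Set.exists_mem_image, exists_eq_left, Set.mem_empty_iff_false, false_and, exists_false,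
    Lit.satReduct.eq_1, Lit.satReduct.eq_2, Lit.satReduct.eq_3, inr_mem_combine, inl_mem_combine,
    Set.mem_inter_iff, Set.mem_sdiff, imp_self, implies_true, and_true, imp_false, not_not]
  rw [and_iff_left fun _ h => h.2, and_iff_left fun _ h => h.1]
  exact forall₂_congr fun r hr =>
    imp_congr_left (forall₂_congr fun L hL => satReduct_t0_iff hnf hr hL I J)

theorem inr_mem_iff_of_mem_SM {M : Set (α ⊕ α)} (hM : M ∈ SM (T0Assuming P W)) (a : α) :
    Sum.inr a ∈ M ↔ a ∈ kOfW P W := by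
  constructor
  · intro ha
    obtain ⟨r, hr, har⟩ := exists_mem_head_of_mem_SM hM ha
    have haK : a ∈ KAtoms P := by
      rcases hr with ((⟨r, -, rfl⟩ | ⟨b, hb, rfl⟩) | ⟨_, -, rfl⟩) | ⟨_, -, rfl⟩
      · simp at har
      · cases har; exact hb
      all_goals simp at har
    by_contra haW
    exact not_satReduct_of_constraint_mem (asmN_constraint_mem_T0Assuming haK haW) hM.1 ha
  · intro ha
    by_contra haM
    exact not_satReduct_of_constraint_mem (asmP_constraint_mem_T0Assuming ha) hM.1 haM

theorem mem_range_combine_of_isModel {I : Set α} {N : Set (α ⊕ α)}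
    (hN : N ⊆ combine I (kOfW P W))
    (hmodel : isModel N (reduct (T0Assuming P W) (combine I (kOfW P W)))) :
    N ∈ Set.range (combine · (kOfW P W)) := by
  refine ⟨restr N, combine_restr fun a => ⟨fun ha => inr_mem_combine.mp (hN ha), fun ha => ?_⟩⟩
  obtain ⟨x, hx, hxN⟩ := isModel_reduct_iff.mp hmodel _ (choice_mem_T0Assuming ha.1)
    (by simpa [Lit.satReduct] using ha)
  rwa [Set.mem_singleton_iff.mp hx] at hxN

theorem restr_image_SM_T0Assuming (hnf : isNormalForm P) :
    restr '' SM (T0Assuming P W) = SM (subjReduct P W) := by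
  have hSM := image_SM_eq_SM (combine · (kOfW P W)) (fun _ _ => combine_subset_combine_iff)
    (isModel_T0Assuming_iff hnf) (fun _ _ => mem_range_combine_of_isModel)
    fun M hM => ⟨restr M, combine_restr (inr_mem_iff_of_mem_SM hM)⟩
  rw [← hSM, Set.image_image]
  simp

end Tester

theorem T0_is_tester_general {α : Type} (P : EProgram α)
    (hnf : isNormalForm P) :
    ∀ W : Set (Set α), W.Nonempty →
      (isWorldview P W ↔
        W = restr '' SMA (T0 P) (asmP P (kOfW P W)) (asmN P (kOfW P W))) := by
  intro W hW
  rw [SMA, ← T0Assuming, restr_image_SM_T0Assuming hnf]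
  exact ⟨fun h => h.2, fun h => ⟨hW, h⟩⟩

/-- `T₀(Π)` is a tester program for any program `Π` in normal
form: a non-empty `W` is a worldview of `Π` iff `W` equals the restriction to
`At(Π)` of the stable models of `T₀(Π)` under the assumption `k(W)`. -/
theorem T0_is_tester {α : Type} (P : EProgram α) (hfin : P.Finite)
    (hnf : isNormalForm P) :
    ∀ W : Set (Set α), W.Nonempty →
      (isWorldview P W ↔
        W = restr '' SMA (T0 P) (asmP P (kOfW P W)) (asmN P (kOfW P W))) :=
  T0_is_tester_general P hnf
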